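/- Let p = (z, t) ∈ ℂ × ℝ satisfy |z|⁴ + t² = 1 and d(p, (1,0)) = 1, where d is the Korányi distance, and define j₃(p) = (conj(z)·(|z|² − i·t), t). Then, with c = |z|², the fourth power of the Korányi distance between p and j₃(p) equals d(p, j₃(p))⁴ = c·(−4c² + 20c − 1) / (2(1 + c)). -/

import Mathlib

/-!
Both points have height `t`, and `w = ‖z‖² - t i` is a unit by the sphere equation, so their
horizontal parts `z` and `v = z̄ w` have the same modulus `c = ‖z‖²`; for such points
`d⁴ = 8c (c - Re (z v̄))`, with `z v̄ = z² w̄`. On the sphere, `d((z, t), (1, 0)) = 1` becomes the linear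
relation `4 (Re z (1 + c) - t Im z) = 6c + 1`; squaring it gives a quadratic relation for `Re z`,
and the two together evaluate `16 (1 + c) (c - Re (z² w̄))`.
-/

open Complex Real

/-- The Korányi (Heisenberg) distance on ℂ × ℝ. -/
noncomputable def kd (p q : ℂ × ℝ) : ℝ :=
  ((‖p.1 - q.1‖) ^ 4 +
    (p.2 - q.2 + 2 * (p.1 * (starRingEnd ℂ) q.1).im) ^ 2) ^ ((1 : ℝ) / 4)

open ComplexConjugate

lemma kd_pow_four (p q : ℂ × ℝ) :
    kd p q ^ 4 = ‖p.1 - q.1‖ ^ 4 + (p.2 - q.2 + 2 * (p.1 * conj q.1).im) ^ 2 := by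
  rw [kd, ← Real.rpow_natCast, ← Real.rpow_mul (by positivity)]
  norm_num

lemma kd_pow_four_of_norm_eq {z v : ℂ} (hv : ‖v‖ = ‖z‖) (t : ℝ) :
    kd (z, t) (v, t) ^ 4 = 8 * ‖z‖ ^ 2 * (‖z‖ ^ 2 - (z * conj v).re) := by
  have hsub : ‖z - v‖ ^ 2 = 2 * ‖z‖ ^ 2 - 2 * (z * conj v).re := by
    simp only [Complex.sq_norm, normSq_sub] at hv ⊢
    rw [← Complex.sq_norm, ← Complex.sq_norm, hv]
    ring
  have hprod : (z * conj v).re ^ 2 + (z * conj v).im ^ 2 = (‖z‖ ^ 2) ^ 2 := by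
    rw [← Complex.sq_norm_sub_sq_re (z * conj v), norm_mul, norm_conj, hv]
    ring
  rw [kd_pow_four, sub_self, zero_add]
  linear_combination (‖z - v‖ ^ 2 + 2 * ‖z‖ ^ 2 - 2 * (z * conj v).re) * hsub + 4 * hprod

lemma kd_one_zero_pow_four_of_sphere {z : ℂ} {t : ℝ} (hsph : ‖z‖ ^ 4 + t ^ 2 = 1) :
    kd (z, t) (1, 0) ^ 4 = 2 + 6 * ‖z‖ ^ 2 - 4 * (z.re * (1 + ‖z‖ ^ 2) - t * z.im) := by
  have hc : ‖z‖ ^ 2 = z.re ^ 2 + z.im ^ 2 := by rw [Complex.sq_norm, normSq_apply]; ring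
  have hsub : ‖z - 1‖ ^ 2 = ‖z‖ ^ 2 - 2 * z.re + 1 := by
    rw [Complex.sq_norm, Complex.sq_norm, normSq_sub]; simp only [map_one, mul_one]; ring
  rw [kd_pow_four]
  simp only [map_one, mul_one, sub_zero]
  linear_combination (‖z - 1‖ ^ 2 + ‖z‖ ^ 2 - 2 * z.re + 1) * hsub + hsph - 4 * hc

lemma re_sq_mul_of_kd_one_zero_eq_one {z : ℂ} {t : ℝ} (hsph : ‖z‖ ^ 4 + t ^ 2 = 1)
    (hd : kd (z, t) (1, 0) = 1) :
    16 * (1 + ‖z‖ ^ 2) * (‖z‖ ^ 2 - (z ^ 2 * (‖z‖ ^ 2 + t * I)).re) =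
      -4 * (‖z‖ ^ 2) ^ 2 + 20 * ‖z‖ ^ 2 - 1 := by
  have hlin : 4 * t * z.im = 4 * z.re * (1 + ‖z‖ ^ 2) - (6 * ‖z‖ ^ 2 + 1) := by
    have h4 : kd (z, t) (1, 0) ^ 4 = 1 := by rw [hd, one_pow]
    linear_combination (kd_one_zero_pow_four_of_sphere hsph).symm.trans h4
  have hc : ‖z‖ ^ 2 = z.re ^ 2 + z.im ^ 2 := by rw [Complex.sq_norm, normSq_apply]; ring
  set c := ‖z‖ ^ 2
  have hsph' : c ^ 2 + t ^ 2 = 1 := by linear_combination hsph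
  -- squaring `hlin` and eliminating `t ^ 2` and `z.im ^ 2` leaves a quadratic in `z.re`
  have hquad : 32 * (1 + c) * z.re ^ 2 - 8 * (1 + c) * (6 * c + 1) * z.re =
      16 * c * (1 - c ^ 2) - (6 * c + 1) ^ 2 := by
    linear_combination -(4 * t * z.im + 4 * z.re * (1 + c) - (6 * c + 1)) * hlin
      + 16 * z.im ^ 2 * hsph' - 16 * (1 - c ^ 2) * hc
  simp only [mul_re, mul_im, add_re, add_im, ofReal_re, ofReal_im, I_re, I_im, pow_two]
  linear_combination hquad + 8 * z.re * (1 + c) * hlin - 16 * c * (1 + c) * hc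

theorem vertical_involution_distance (z : ℂ) (t : ℝ)
    (hsph : (‖z‖) ^ 4 + t ^ 2 = 1)
    (hd : kd (z, t) ((1 : ℂ), (0 : ℝ)) = 1) :
    (kd (z, t) ((starRingEnd ℂ) z * ((((‖z‖) ^ 2 : ℝ) : ℂ) - (t : ℂ) * Complex.I), t)) ^ 4 =
      (‖z‖) ^ 2 * (-4 * ((‖z‖) ^ 2) ^ 2 + 20 * (‖z‖) ^ 2 - 1) /
        (2 * (1 + (‖z‖) ^ 2)) := by
  set w : ℂ := ((‖z‖ ^ 2 : ℝ) : ℂ) - t * I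
  have hw : ‖w‖ = 1 := by
    rw [← pow_eq_one_iff_of_nonneg (norm_nonneg w) two_ne_zero, Complex.sq_norm, normSq_apply]
    simp only [w, sub_re, sub_im, mul_re, mul_im, ofReal_re, ofReal_im, I_re, I_im]
    linear_combination hsph
  have hv : ‖conj z * w‖ = ‖z‖ := by rw [norm_mul, norm_conj, hw, mul_one]
  have hconj : z * conj (conj z * w) = z ^ 2 * (‖z‖ ^ 2 + t * I) := by
    simp [w, pow_two, mul_assoc]
  rw [kd_pow_four_of_norm_eq hv, hconj, eq_div_iff (by positivity)]
  linear_combination ‖z‖ ^ 2 * re_sq_mul_of_kd_one_zero_eq_one hsph hd
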